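/- Fix strikes 0 < K_1 < … < K_N and a barrier U > 0. Let σ_* = (σ_{*1}, σ_{*2}) with σ_{*1}, σ_{*2} > 0, let Σ^{σ_*} be the PCLVG implied volatility surface for σ_*, and suppose there is an index i with K_i < U such that the index j̲ = max{ j : U < K_j ≤ U + (U−K_i)·σ_{*2}/σ_{*1} } is well defined. Let T > 0, let S ≥ U, and let Σ : {K_1,…,K_N} × (0,T] → (0,∞) satisfy the lower beliefs generated by Σ^{σ_*} on (0,T]. Then for every τ ∈ (0,T], the risk-reversal portfolio long one call struck at K_{j̲} and short one put struck at K_i has a strictly positive price: C^bs(S, K_{j̲}, τ, Σ(K_{j̲},τ)) − P^bs(S, K_i, τ, Σ(K_i,τ)) > 0. -/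

import Mathlib

open MeasureTheory Filter Set

/-- Standard normal cumulative distribution function. -/
noncomputable def stdNormalCDF (x : ℝ) : ℝ :=
  (Real.sqrt (2 * Real.pi))⁻¹ * ∫ y in Set.Iic x, Real.exp (-(y ^ 2) / 2)

/-- Black–Scholes call price with zero interest and dividend rates. -/
noncomputable def bsCall (S K τ σ : ℝ) : ℝ :=
  let d1 := (Real.log (S / K) + σ ^ 2 * τ / 2) / (σ * Real.sqrt τ)
  S * stdNormalCDF d1 - K * stdNormalCDF (d1 - σ * Real.sqrt τ)

/-- Black–Scholes put price with zero interest and dividend rates. -/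
noncomputable def bsPut (S K τ σ : ℝ) : ℝ := bsCall S K τ σ - S + K

/-- The denominator appearing in the PCLVG call price formula. -/
noncomputable def pclvgD (σ1 σ2 U τ : ℝ) : ℝ :=
  1 / σ1 + 1 / σ2 - (1 / σ2 - 1 / σ1) * Real.exp (-2 * U / (σ1 * τ))

/-- The explicit PCLVG call price `C^σ(U,K,τ)`. -/
noncomputable def pclvgCall (σ1 σ2 U K τ : ℝ) : ℝ :=
  if K < U then
    (U - K) +
      τ * Real.exp (-(U - K) / (σ1 * τ)) * (1 - Real.exp (-2 * K / (σ1 * τ))) /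
        pclvgD σ1 σ2 U τ
  else
    τ * Real.exp (-(K - U) / (σ2 * τ)) * (1 - Real.exp (-2 * U / (σ1 * τ))) /
      pclvgD σ1 σ2 U τ

/-- The PCLVG put price `P^σ(U,K,τ) = C^σ(U,K,τ) − (U − K)`. -/
noncomputable def pclvgPut (σ1 σ2 U K τ : ℝ) : ℝ := pclvgCall σ1 σ2 U K τ - (U - K)

/-! Black–Scholes prices increase with the volatility (the vega `K φ(d₂) √τ` is positive), the
call increases and the put decreases with the spot (the delta `Φ(d₁)` lies in `[0, 1]`), and
multiplying the volatility by `c` is the same as multiplying the maturity by `c²`. Hence the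
beliefs bound the call at `K_{j̲}` from below and the put at `K_i` from above by the PCLVG prices
at spot `U` and maturity `c²τ`. In the explicit PCLVG formulas both of these are time values
`τ e (1 - f) / D`, and `K_{j̲} - U ≤ (U - K_i) σ₂ / σ₁` makes the call's exponential decay
`e` no faster than the put's, while its factor `1 - f` is strictly larger. -/

open Real

noncomputable def stdNormalPDF (x : ℝ) : ℝ :=
  (√(2 * π))⁻¹ * exp (-(x ^ 2) / 2)

lemma stdNormalPDF_pos (x : ℝ) : 0 < stdNormalPDF x := by
  unfold stdNormalPDF
  positivity

lemma integrable_exp_neg_sq_div_two : Integrable fun y : ℝ => exp (-(y ^ 2) / 2) := by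
  convert integrable_exp_neg_mul_sq (by norm_num : (0 : ℝ) < 1 / 2) using 2 with y
  ring_nf

lemma integral_exp_neg_sq_div_two : ∫ y : ℝ, exp (-(y ^ 2) / 2) = √(2 * π) := by
  convert integral_gaussian (1 / 2) using 2 with y
  · ring_nf
  · field_simp

lemma hasDerivAt_stdNormalCDF (x : ℝ) : HasDerivAt stdNormalCDF (stdNormalPDF x) x := by
  set f : ℝ → ℝ := fun y => exp (-(y ^ 2) / 2)
  have hf : Continuous f := by fun_prop
  have hsplit : stdNormalCDF =
      fun z => (√(2 * π))⁻¹ * ((∫ y in Iic 0, f y) + ∫ y in (0 : ℝ)..z, f y) := by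
    funext z
    rw [stdNormalCDF, ← intervalIntegral.integral_Iic_sub_Iic
      integrable_exp_neg_sq_div_two.integrableOn integrable_exp_neg_sq_div_two.integrableOn,
      add_sub_cancel]
  rw [hsplit]
  exact ((intervalIntegral.integral_hasDerivAt_right integrable_exp_neg_sq_div_two.intervalIntegrable
    (hf.stronglyMeasurableAtFilter _ _) hf.continuousAt).const_add _).const_mul _

lemma stdNormalCDF_nonneg (x : ℝ) : 0 ≤ stdNormalCDF x := by
  have : 0 ≤ ∫ y in Iic x, exp (-(y ^ 2) / 2) :=
    setIntegral_nonneg measurableSet_Iic fun y _ => (exp_pos _).le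
  unfold stdNormalCDF
  positivity

lemma stdNormalCDF_le_one (x : ℝ) : stdNormalCDF x ≤ 1 := by
  have hle : ∫ y in Iic x, exp (-(y ^ 2) / 2) ≤ ∫ y : ℝ, exp (-(y ^ 2) / 2) :=
    setIntegral_le_integral integrable_exp_neg_sq_div_two
      (Eventually.of_forall fun y => (exp_pos _).le)
  rw [stdNormalCDF, inv_mul_le_iff₀ (by positivity), mul_one, ← integral_exp_neg_sq_div_two]
  exact hle

lemma mul_stdNormalPDF_eq {S K v : ℝ} (hS : 0 < S) (hK : 0 < K) (hv : v ≠ 0) :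
    S * stdNormalPDF ((log (S / K) + v ^ 2 / 2) / v) =
      K * stdNormalPDF ((log (S / K) + v ^ 2 / 2) / v - v) := by
  set d := (log (S / K) + v ^ 2 / 2) / v
  have hd : d * v = log (S / K) + v ^ 2 / 2 := div_mul_cancel₀ _ hv
  have hexp : exp (-(d - v) ^ 2 / 2) = S / K * exp (-(d ^ 2) / 2) := by
    rw [← exp_log (div_pos hS hK), ← exp_add]
    congr 1
    linear_combination hd
  rw [stdNormalPDF, stdNormalPDF, hexp]
  field_simp

/-- Both the vega and the delta of a Black–Scholes call come from this computation: the terms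
with `d'` cancel because `s φ(d) = K φ(d - v)`. -/
lemma hasDerivAt_mul_stdNormalCDF_sub {s d v : ℝ → ℝ} {s' d' v' x : ℝ} (K : ℝ)
    (hs : HasDerivAt s s' x) (hd : HasDerivAt d d' x) (hv : HasDerivAt v v' x)
    (hsd : s x * stdNormalPDF (d x) = K * stdNormalPDF (d x - v x)) :
    HasDerivAt (fun y => s y * stdNormalCDF (d y) - K * stdNormalCDF (d y - v y))
      (s' * stdNormalCDF (d x) + K * stdNormalPDF (d x - v x) * v') x := by
  refine ((hs.mul ((hasDerivAt_stdNormalCDF _).comp x hd)).sub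
    (((hasDerivAt_stdNormalCDF _).comp x (hd.sub hv)).const_mul K)).congr_deriv ?_
  simp only [Function.comp_apply, Pi.sub_apply]
  linear_combination d' * hsd

lemma monotoneOn_Ioi_of_hasDerivAt_nonneg {f f' : ℝ → ℝ} {a : ℝ}
    (hf : ∀ x ∈ Ioi a, HasDerivAt f (f' x) x) (hf' : ∀ x ∈ Ioi a, 0 ≤ f' x) :
    MonotoneOn f (Ioi a) :=
  monotoneOn_of_hasDerivWithinAt_nonneg (convex_Ioi a)
    (fun x hx => (hf x hx).continuousAt.continuousWithinAt)
    (by simpa only [interior_Ioi] using fun x hx => (hf x hx).hasDerivWithinAt)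
    (by simpa only [interior_Ioi] using hf')

noncomputable def bsD1 (S K τ σ : ℝ) : ℝ :=
  (log (S / K) + σ ^ 2 * τ / 2) / (σ * √τ)

lemma bsCall_eq (S K τ σ : ℝ) : bsCall S K τ σ =
    S * stdNormalCDF (bsD1 S K τ σ) - K * stdNormalCDF (bsD1 S K τ σ - σ * √τ) :=
  rfl

section BlackScholes

variable {S K τ σ : ℝ}

lemma mul_stdNormalPDF_bsD1 (hS : 0 < S) (hK : 0 < K) (hτ : 0 < τ) (hσ : 0 < σ) :
    S * stdNormalPDF (bsD1 S K τ σ) = K * stdNormalPDF (bsD1 S K τ σ - σ * √τ) := by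
  have hv : (σ * √τ) ^ 2 = σ ^ 2 * τ := by rw [mul_pow, sq_sqrt hτ.le]
  have := mul_stdNormalPDF_eq hS hK (by positivity : σ * √τ ≠ 0)
  rw [hv] at this
  exact this

lemma hasDerivAt_bsCall_vol (hS : 0 < S) (hK : 0 < K) (hτ : 0 < τ) (hσ : 0 < σ) :
    HasDerivAt (fun σ => bsCall S K τ σ)
      (K * stdNormalPDF (bsD1 S K τ σ - σ * √τ) * √τ) σ := by
  have hd : DifferentiableAt ℝ (fun σ => bsD1 S K τ σ) σ := by
    unfold bsD1
    fun_prop (disch := positivity)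
  simpa [bsCall_eq] using hasDerivAt_mul_stdNormalCDF_sub K (hasDerivAt_const σ S) hd.hasDerivAt
    ((hasDerivAt_id σ).mul_const √τ) (mul_stdNormalPDF_bsD1 hS hK hτ hσ)

lemma hasDerivAt_bsCall_spot (hS : 0 < S) (hK : 0 < K) (hτ : 0 < τ) (hσ : 0 < σ) :
    HasDerivAt (fun S => bsCall S K τ σ) (stdNormalCDF (bsD1 S K τ σ)) S := by
  have hd : DifferentiableAt ℝ (fun S => bsD1 S K τ σ) S := by
    unfold bsD1
    fun_prop (disch := positivity)
  simpa [bsCall_eq] using hasDerivAt_mul_stdNormalCDF_sub K (hasDerivAt_id S) hd.hasDerivAt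
    (hasDerivAt_const S (σ * √τ)) (mul_stdNormalPDF_bsD1 hS hK hτ hσ)

lemma bsCall_monotoneOn_vol (hS : 0 < S) (hK : 0 < K) (hτ : 0 < τ) :
    MonotoneOn (fun σ => bsCall S K τ σ) (Ioi 0) :=
  monotoneOn_Ioi_of_hasDerivAt_nonneg (fun _ hσ => hasDerivAt_bsCall_vol hS hK hτ hσ)
    fun _ _ => mul_nonneg (mul_nonneg hK.le (stdNormalPDF_pos _).le) (sqrt_nonneg τ)

lemma bsPut_monotoneOn_vol (hS : 0 < S) (hK : 0 < K) (hτ : 0 < τ) :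
    MonotoneOn (fun σ => bsPut S K τ σ) (Ioi 0) := fun _ ha _ hb hab => by
  simpa [bsPut] using bsCall_monotoneOn_vol hS hK hτ ha hb hab

lemma bsCall_monotoneOn_spot (hK : 0 < K) (hτ : 0 < τ) (hσ : 0 < σ) :
    MonotoneOn (fun S => bsCall S K τ σ) (Ioi 0) :=
  monotoneOn_Ioi_of_hasDerivAt_nonneg (fun _ hS => hasDerivAt_bsCall_spot hS hK hτ hσ)
    fun _ _ => stdNormalCDF_nonneg _

lemma bsPut_antitoneOn_spot (hK : 0 < K) (hτ : 0 < τ) (hσ : 0 < σ) :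
    AntitoneOn (fun S => bsPut S K τ σ) (Ioi 0) := by
  have hmono : MonotoneOn (fun S => S - bsCall S K τ σ) (Ioi 0) :=
    monotoneOn_Ioi_of_hasDerivAt_nonneg
      (fun S hS => (hasDerivAt_id' S).sub (hasDerivAt_bsCall_spot hS hK hτ hσ))
      fun _ _ => sub_nonneg.2 (stdNormalCDF_le_one _)
  intro a ha b hb hab
  have := hmono ha hb hab
  simp only [bsPut]
  linarith

lemma bsCall_mul_vol {c : ℝ} (hc : 0 ≤ c) : bsCall S K τ (c * σ) = bsCall S K (c ^ 2 * τ) σ := by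
  rw [bsCall_eq, bsCall_eq, bsD1, bsD1, sqrt_mul (sq_nonneg c), sqrt_sq hc]
  ring_nf

lemma bsPut_mul_vol {c : ℝ} (hc : 0 ≤ c) : bsPut S K τ (c * σ) = bsPut S K (c ^ 2 * τ) σ := by
  rw [bsPut, bsPut, bsCall_mul_vol hc]

lemma bsCall_scaled_le {U S σ' c : ℝ} (hU : 0 < U) (hUS : U ≤ S) (hK : 0 < K) (hτ : 0 < τ)
    (hc : 0 < c) (hσ : 0 < σ) (hσσ' : c * σ ≤ σ') :
    bsCall U K (c ^ 2 * τ) σ ≤ bsCall S K τ σ' := by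
  have hcσ : 0 < c * σ := mul_pos hc hσ
  calc bsCall U K (c ^ 2 * τ) σ = bsCall U K τ (c * σ) := (bsCall_mul_vol hc.le).symm
    _ ≤ bsCall S K τ (c * σ) := bsCall_monotoneOn_spot hK hτ hcσ hU (hU.trans_le hUS) hUS
    _ ≤ bsCall S K τ σ' :=
      bsCall_monotoneOn_vol (hU.trans_le hUS) hK hτ hcσ (hcσ.trans_le hσσ') hσσ'

lemma bsPut_le_scaled {U S σ' c : ℝ} (hU : 0 < U) (hUS : U ≤ S) (hK : 0 < K) (hτ : 0 < τ)
    (hc : 0 < c) (hσ : 0 < σ) (hσ' : 0 < σ') (hσ'σ : σ' ≤ c * σ) :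
    bsPut S K τ σ' ≤ bsPut U K (c ^ 2 * τ) σ := by
  have hcσ : 0 < c * σ := mul_pos hc hσ
  calc bsPut S K τ σ' ≤ bsPut S K τ (c * σ) :=
        bsPut_monotoneOn_vol (hU.trans_le hUS) hK hτ hσ' hcσ hσ'σ
    _ ≤ bsPut U K τ (c * σ) := bsPut_antitoneOn_spot hK hτ hcσ hU (hU.trans_le hUS) hUS
    _ = bsPut U K (c ^ 2 * τ) σ := bsPut_mul_vol hc.le

end BlackScholes

section PCLVG

variable {σ1 σ2 U τ : ℝ}

lemma pclvgD_pos (h1 : 0 < σ1) (h2 : 0 < σ2) (hU : 0 < U) (hτ : 0 < τ) :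
    0 < pclvgD σ1 σ2 U τ := by
  have he : exp (-2 * U / (σ1 * τ)) < 1 := exp_lt_one_iff.2 <|
    div_neg_of_neg_of_pos (by linarith) (by positivity)
  have hD : pclvgD σ1 σ2 U τ =
      1 / σ1 * (1 + exp (-2 * U / (σ1 * τ))) + 1 / σ2 * (1 - exp (-2 * U / (σ1 * τ))) := by
    rw [pclvgD]
    ring
  rw [hD]
  exact add_pos (by positivity) (mul_pos (by positivity) (sub_pos.2 he))

lemma pclvgPut_of_lt {K : ℝ} (hK : K < U) : pclvgPut σ1 σ2 U K τ =
    τ * exp (-(U - K) / (σ1 * τ)) * (1 - exp (-2 * K / (σ1 * τ))) / pclvgD σ1 σ2 U τ := by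
  rw [pclvgPut, pclvgCall, if_pos hK]
  ring

lemma pclvgCall_of_le {K : ℝ} (hK : U ≤ K) : pclvgCall σ1 σ2 U K τ =
    τ * exp (-(K - U) / (σ2 * τ)) * (1 - exp (-2 * U / (σ1 * τ))) / pclvgD σ1 σ2 U τ := by
  rw [pclvgCall, if_neg hK.not_gt]

lemma pclvgPut_lt_pclvgCall {Ki Kj : ℝ} (h1 : 0 < σ1) (h2 : 0 < σ2) (hKi : 0 < Ki)
    (hiU : Ki < U) (hUj : U < Kj) (hj : Kj ≤ U + (U - Ki) * σ2 / σ1) (hτ : 0 < τ) :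
    pclvgPut σ1 σ2 U Ki τ < pclvgCall σ1 σ2 U Kj τ := by
  rw [pclvgPut_of_lt hiU, pclvgCall_of_le hUj.le]
  gcongr ?_ / _
  · exact pclvgD_pos h1 h2 (hKi.trans hiU) hτ
  have hdecay : (Kj - U) / σ2 ≤ (U - Ki) / σ1 := by
    rw [div_le_div_iff₀ h2 h1, ← le_div_iff₀ h1]
    linarith
  have he : exp (-(U - Ki) / (σ1 * τ)) ≤ exp (-(Kj - U) / (σ2 * τ)) := by
    rw [exp_le_exp, neg_div, neg_div, neg_le_neg_iff, ← div_div, ← div_div]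
    exact div_le_div_of_nonneg_right hdecay hτ.le
  have hf : exp (-2 * U / (σ1 * τ)) < exp (-2 * Ki / (σ1 * τ)) := by
    rw [exp_lt_exp]
    exact div_lt_div_of_pos_right (by linarith) (by positivity)
  have hf1 : exp (-2 * Ki / (σ1 * τ)) < 1 := exp_lt_one_iff.2 <|
    div_neg_of_neg_of_pos (by linarith) (by positivity)
  calc τ * exp (-(U - Ki) / (σ1 * τ)) * (1 - exp (-2 * Ki / (σ1 * τ)))
      ≤ τ * exp (-(Kj - U) / (σ2 * τ)) * (1 - exp (-2 * Ki / (σ1 * τ))) := by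
        gcongr
    _ < τ * exp (-(Kj - U) / (σ2 * τ)) * (1 - exp (-2 * U / (σ1 * τ))) := by
        gcongr

end PCLVG

theorem rtis_positive_price_general (n : ℕ) (K : Fin n → ℝ)
    (hKpos : ∀ j, 0 < K j)
    (U : ℝ) (hU : 0 < U)
    (σs1 σs2 : ℝ) (h1 : 0 < σs1) (h2 : 0 < σs2)
    (IVstar : ℝ → ℝ → ℝ)
    (hIVstar : ∀ K' τ : ℝ, 0 < K' → 0 < τ → 0 < IVstar K' τ ∧
      bsCall U K' τ (IVstar K' τ) = pclvgCall σs1 σs2 U K' τ)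
    (i jlo : Fin n) (hi : K i < U)
    (hjlo1 : U < K jlo) (hjlo2 : K jlo ≤ U + (U - K i) * σs2 / σs1)
    (T : ℝ) (S : ℝ) (hSU : U ≤ S)
    (IV : Fin n → ℝ → ℝ) (hIVpos : ∀ j τ, 0 < τ → τ ≤ T → 0 < IV j τ)
    (hbeliefs : ∃ c : ℝ, 0 < c ∧ ∀ τ : ℝ, 0 < τ → τ ≤ T →
      (∀ i', K i' < U → IV i' τ ≤ c * IVstar (K i') (c ^ 2 * τ)) ∧
      (∀ j, U < K j → c * IVstar (K j) (c ^ 2 * τ) ≤ IV j τ)) :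
    ∀ τ : ℝ, 0 < τ → τ ≤ T →
      0 < bsCall S (K jlo) τ (IV jlo τ) - bsPut S (K i) τ (IV i τ) := by
  obtain ⟨c, hc, hbeliefs⟩ := hbeliefs
  intro τ hτ hτT
  obtain ⟨hput, hcall⟩ := hbeliefs τ hτ hτT
  have hcτ : 0 < c ^ 2 * τ := by positivity
  obtain ⟨hσi, hCi⟩ := hIVstar (K i) _ (hKpos i) hcτ
  obtain ⟨hσj, hCj⟩ := hIVstar (K jlo) _ (hKpos jlo) hcτ
  have hcall_bound : pclvgCall σs1 σs2 U (K jlo) (c ^ 2 * τ) ≤ bsCall S (K jlo) τ (IV jlo τ) :=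
    hCj ▸ bsCall_scaled_le hU hSU (hKpos jlo) hτ hc hσj (hcall jlo hjlo1)
  have hput_bound : bsPut S (K i) τ (IV i τ) ≤ pclvgPut σs1 σs2 U (K i) (c ^ 2 * τ) :=
    calc _ ≤ bsPut U (K i) (c ^ 2 * τ) (IVstar (K i) (c ^ 2 * τ)) :=
          bsPut_le_scaled hU hSU (hKpos i) hτ hc hσi (hIVpos i τ hτ hτT) (hput i hi)
      _ = pclvgPut σs1 σs2 U (K i) (c ^ 2 * τ) := by
          rw [bsPut, hCi, pclvgPut]
          ring
  linarith [pclvgPut_lt_pclvgCall h1 h2 (hKpos i) hi hjlo1 hjlo2 hcτ]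

/-- First defining property of the RTIS portfolio (Proposition 5.1 of the
paper): under lower beliefs generated by a PCLVG dominating surface, with the spot at or above
the barrier, the risk reversal long a call struck at `K_{j̲}` and short a put struck at `K_i`
has a strictly positive price for all maturities up to `T`. -/
theorem rtis_positive_price (n : ℕ) (K : Fin n → ℝ)
    (hKpos : ∀ j, 0 < K j) (hKmono : StrictMono K)
    (U : ℝ) (hU : 0 < U)
    (σs1 σs2 : ℝ) (h1 : 0 < σs1) (h2 : 0 < σs2)
    (IVstar : ℝ → ℝ → ℝ)
    (hIVstar : ∀ K' τ : ℝ, 0 < K' → 0 < τ → 0 < IVstar K' τ ∧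
      bsCall U K' τ (IVstar K' τ) = pclvgCall σs1 σs2 U K' τ)
    (i jlo : Fin n) (hi : K i < U)
    (hjlo1 : U < K jlo) (hjlo2 : K jlo ≤ U + (U - K i) * σs2 / σs1)
    (hjlo3 : ∀ j, U < K j → K j ≤ U + (U - K i) * σs2 / σs1 → K j ≤ K jlo)
    (T : ℝ) (hT : 0 < T) (S : ℝ) (hSU : U ≤ S)
    (IV : Fin n → ℝ → ℝ) (hIVpos : ∀ j τ, 0 < τ → τ ≤ T → 0 < IV j τ)
    (hbeliefs : ∃ c : ℝ, 0 < c ∧ ∀ τ : ℝ, 0 < τ → τ ≤ T →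
      (∀ i', K i' < U → IV i' τ ≤ c * IVstar (K i') (c ^ 2 * τ)) ∧
      (∀ j, U < K j → c * IVstar (K j) (c ^ 2 * τ) ≤ IV j τ)) :
    ∀ τ : ℝ, 0 < τ → τ ≤ T →
      0 < bsCall S (K jlo) τ (IV jlo τ) - bsPut S (K i) τ (IV i τ) :=
  rtis_positive_price_general n K hKpos U hU σs1 σs2 h1 h2 IVstar hIVstar i jlo hi hjlo1 hjlo2 T S
    hSU IV hIVpos hbeliefs
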